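/- Let G be a connected graph with at least two vertices and let n ≥ 3 be an integer. If n²·λ′(G) > n·ξ(G) + 2(n−1), then the direct product G × T_n is super restricted edge-connected. -/

import Mathlib

/-!
The edge `(u, 0)(v, 0)` of `G × Tₙ`, for an edge `uv` of `G` of minimum edge-degree, is isolated by
`n ξ(G) + 2(n - 1)` edges, so `λ'(G × Tₙ)` is at most that. Conversely, let `F` be a minimum
restricted edge-cut of `G × Tₙ` none of whose components is a single edge, let `A` be a component of
`(G × Tₙ) - F` and `a u = #{i | (u, i) ∈ A}`. The edges leaving `A` lie in `F` and number
`∑_{u ~ v} a(u) (n - a(v))`. If two adjacent vertices of `G` are split (`0 < a < n`), the edges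
around them already give `nξ(G) + 2n - 1` (the profiles `a = 1` and `a = n - 1` need the third
vertex of the component), which exceeds `|F|`. Otherwise the split vertices are independent:
either a vertex with `a ∈ {0, n}` and no neighbour of the same value again gives too many edges,
or putting each split vertex on the side where it has more neighbours yields a restricted
edge-cut `C` of `G` with `n² |C| ≤ |F|`, against `n² λ'(G) > nξ(G) + 2(n - 1)`.
-/

open SimpleGraph

/-- The direct (tensor/Kronecker) product of two simple graphs:
`(u₁, v₁)` and `(u₂, v₂)` are adjacent iff `u₁u₂ ∈ E(G)` and `v₁v₂ ∈ E(H)`. -/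
def tensorProd {α β : Type*} (G : SimpleGraph α) (H : SimpleGraph β) :
    SimpleGraph (α × β) where
  Adj x y := G.Adj x.1 y.1 ∧ H.Adj x.2 y.2
  symm := ⟨fun _ _ h => ⟨h.1.symm, h.2.symm⟩⟩
  loopless := ⟨fun _ h => G.irrefl h.1⟩

/-- The direct product `G × Tₙ` of a simple graph `G` with the total graph `Tₙ`
(the complete graph `Kₙ` with a loop added at every vertex):  since `Tₙ` has all
possible edges and loops, `(u₁, v₁)` is adjacent to `(u₂, v₂)` iff `u₁u₂ ∈ E(G)`. -/
def totalProd {α : Type*} (G : SimpleGraph α) (n : ℕ) :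
    SimpleGraph (α × Fin n) where
  Adj x y := G.Adj x.1 y.1
  symm := ⟨fun _ _ h => h.symm⟩
  loopless := ⟨fun _ h => G.irrefl h⟩

/-- The direct product `K₂ × Kₙ`. -/
def K2timesKn (n : ℕ) : SimpleGraph (Fin 2 × Fin n) :=
  tensorProd (completeGraph (Fin 2)) (completeGraph (Fin n))

/-- The direct product `K₂ × Tₙ` (isomorphic to the complete bipartite graph `K_{n,n}`). -/
def K2timesTn (n : ℕ) : SimpleGraph (Fin 2 × Fin n) :=
  totalProd (completeGraph (Fin 2)) n

/-- `[A, V ∖ A]` : the set of edges of `G` with exactly one endpoint in `A`. -/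
def cutEdges {α : Type*} (G : SimpleGraph α) (A : Set α) : Set (Sym2 α) :=
  {e | e ∈ G.edgeSet ∧ ∃ u v, e = s(u, v) ∧ u ∈ A ∧ v ∉ A}

/-- `F` is an edge-cut of `G`: a set of edges whose deletion disconnects `G`. -/
def IsEdgeCut {α : Type*} (G : SimpleGraph α) (F : Set (Sym2 α)) : Prop :=
  F ⊆ G.edgeSet ∧ ¬ (G.deleteEdges F).Connected

/-- The edge-connectivity `λ(G)`: the minimum cardinality of an edge-cut. -/
noncomputable def edgeConn {α : Type*} (G : SimpleGraph α) : ℕ :=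
  sInf {k | ∃ F : Finset (Sym2 α), IsEdgeCut G ↑F ∧ F.card = k}

/-- `G` is super edge-connected (super-λ): every minimum edge-cut is exactly the
set of edges incident with some vertex. -/
def SuperEdgeConnected {α : Type*} (G : SimpleGraph α) : Prop :=
  ∀ F : Finset (Sym2 α), IsEdgeCut G ↑F → F.card = edgeConn G →
    ∃ v, (F : Set (Sym2 α)) = G.incidenceSet v

/-- `F` is a restricted edge-cut of `G`: its deletion disconnects `G` and every
connected component of `G − F` has at least two vertices. -/
def IsRestrictedEdgeCut {α : Type*} (G : SimpleGraph α) (F : Set (Sym2 α)) : Prop :=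
  F ⊆ G.edgeSet ∧ ¬ (G.deleteEdges F).Connected ∧
    ∀ c : (G.deleteEdges F).ConnectedComponent, c.supp.Nontrivial

/-- The restricted edge-connectivity `λ'(G) : ℕ∞`: the minimum cardinality of a
restricted edge-cut, and `+∞` (`⊤`) if no restricted edge-cut exists. -/
noncomputable def restrictedEdgeConn {α : Type*} (G : SimpleGraph α) : ℕ∞ :=
  sInf {k : ℕ∞ | ∃ F : Finset (Sym2 α), IsRestrictedEdgeCut G ↑F ∧ (F.card : ℕ∞) = k}

/-- `G` is super restricted edge-connected (super-λ'): every minimum restricted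
edge-cut isolates an edge, i.e. some component of `G − F` is a single edge. -/
def SuperRestrictedEdgeConnected {α : Type*} (G : SimpleGraph α) : Prop :=
  ∀ F : Finset (Sym2 α), IsRestrictedEdgeCut G ↑F →
    (F.card : ℕ∞) = restrictedEdgeConn G →
    ∃ u v, (G.deleteEdges ↑F).Adj u v ∧
      ((G.deleteEdges ↑F).connectedComponentMk u).supp = {u, v}

/-- The minimum edge-degree `ξ(G) = min { d(u) + d(v) − 2 : uv ∈ E(G) }`. -/
noncomputable def minEdgeDegree {α : Type*} (G : SimpleGraph α) : ℕ :=
  sInf {k | ∃ u v, G.Adj u v ∧ (G.neighborSet u).ncard + (G.neighborSet v).ncard - 2 = k}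

open Finset

namespace Finset
variable {ι : Type*} [DecidableEq ι] {s : Finset ι} {f : ι → ℕ} {c : ℕ}

lemma card_sub_one_mul_le_sum_erase (h : ∀ i ∈ s, c ≤ f i) {j : ι} (hj : j ∈ s) :
    (#s - 1) * c ≤ ∑ i ∈ s.erase j, f i := by
  rw [← card_erase_of_mem hj, ← smul_eq_mul]
  exact card_nsmul_le_sum _ _ _ fun i hi => h i (mem_of_mem_erase hi)

lemma add_card_sub_one_mul_le_sum (h : ∀ i ∈ s, c ≤ f i) {j : ι} (hj : j ∈ s) :
    f j + (#s - 1) * c ≤ ∑ i ∈ s, f i := by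
  rw [← add_sum_erase s f hj]
  exact Nat.add_le_add_left (card_sub_one_mul_le_sum_erase h hj) _

lemma add_add_card_sub_two_mul_le_sum (h : ∀ i ∈ s, c ≤ f i) {i j : ι} (hi : i ∈ s) (hj : j ∈ s)
    (hij : i ≠ j) : f i + f j + (#s - 2) * c ≤ ∑ i ∈ s, f i := by
  have := add_card_sub_one_mul_le_sum (fun k hk => h k (mem_of_mem_erase hk))
    (mem_erase.2 ⟨hij.symm, hj⟩)
  rw [card_erase_of_mem hi, show #s - 1 - 1 = #s - 2 by omega] at this
  rw [← add_sum_erase s f hi]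
  omega

lemma sum_add_swap_eq_sum_union_image {α : Type*} [DecidableEq α] (f : α → α → ℕ) {x : α}
    {s : Finset α} (hx : x ∉ s) :
    ∑ w ∈ s, (f x w + f w x) =
      ∑ p ∈ s.image (fun w => (x, w)) ∪ s.image (fun w => (w, x)), f p.1 p.2 := by
  rw [sum_union, sum_image, sum_image, sum_add_distrib]
  · exact fun _ _ _ _ h => (Prod.ext_iff.1 h).1
  · exact fun _ _ _ _ h => (Prod.ext_iff.1 h).2
  · simp only [Finset.disjoint_left, mem_image, not_exists, not_and]
    rintro _ ⟨w, hw, rfl⟩ w' - h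
    obtain ⟨-, rfl⟩ := Prod.mk.inj h
    exact hx hw

end Finset

namespace SimpleGraph

section Components
variable {α : Type*} {Γ : SimpleGraph α}

lemma Reachable.mem_of_adj_closed {K : Set α} (hK : ∀ ⦃p q⦄, Γ.Adj p q → p ∈ K → q ∈ K)
    {x y : α} (h : Γ.Reachable x y) (hx : x ∈ K) : y ∈ K := by
  obtain ⟨w⟩ := h
  induction w with
  | nil => exact hx
  | cons h _ ih => exact ih (hK h hx)

lemma supp_connectedComponentMk_subset_of_adj_closed {K : Set α}
    (hK : ∀ ⦃p q⦄, Γ.Adj p q → p ∈ K → q ∈ K) {x : α} (hx : x ∈ K) :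
    (Γ.connectedComponentMk x).supp ⊆ K := fun _ hy =>
  (ConnectedComponent.exact hy).symm.mem_of_adj_closed hK hx

lemma not_connected_of_adj_closed {K : Set α} (hK : ∀ ⦃p q⦄, Γ.Adj p q → p ∈ K → q ∈ K)
    {x y : α} (hx : x ∈ K) (hy : y ∉ K) : ¬ Γ.Connected := fun h =>
  hy ((h.preconnected x y).mem_of_adj_closed hK hx)

lemma exists_adj_of_supp_nontrivial {x : α} (h : (Γ.connectedComponentMk x).supp.Nontrivial) :
    ∃ y, Γ.Adj x y := by
  obtain ⟨y, hy, hyx⟩ := h.exists_ne x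
  obtain ⟨w⟩ := (ConnectedComponent.exact hy).symm
  exact ⟨_, w.adj_snd (w.not_nil_of_ne hyx.symm)⟩

lemma ConnectedComponent.supp_nontrivial_of_forall_exists_adj (h : ∀ x, ∃ y, Γ.Adj x y)
    (c : Γ.ConnectedComponent) : c.supp.Nontrivial := by
  obtain ⟨x, rfl⟩ := c.exists_rep
  obtain ⟨y, hy⟩ := h x
  exact ⟨x, rfl, y, ConnectedComponent.connectedComponentMk_eq_of_adj hy.symm, hy.ne⟩

lemma adj_of_supp_connectedComponentMk_subset_pair {p q : α}
    (hc : (Γ.connectedComponentMk p).supp.Nontrivial)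
    (h : (Γ.connectedComponentMk p).supp ⊆ {p, q}) : Γ.Adj p q := by
  obtain ⟨r, hr, hrp⟩ := hc.exists_ne p
  obtain ⟨w⟩ := (ConnectedComponent.exact hr).symm
  have hnil : ¬ w.Nil := w.not_nil_of_ne hrp.symm
  have hsnd : w.snd ∈ (Γ.connectedComponentMk p).supp :=
    ConnectedComponent.connectedComponentMk_eq_of_adj (w.adj_snd hnil).symm
  rcases h hsnd with hp | hq
  · exact absurd hp (w.adj_snd hnil).ne'
  · exact hq ▸ w.adj_snd hnil

end Components

section Cuts
variable {α : Type*} {G : SimpleGraph α}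

lemma deleteEdges_cutEdges_adj {K : Set α} {p q : α} :
    (G.deleteEdges (cutEdges G K)).Adj p q ↔ G.Adj p q ∧ (p ∈ K ↔ q ∈ K) := by
  simp only [deleteEdges_adj, cutEdges, Set.mem_ofPred_eq, not_and, not_exists]
  constructor
  · rintro ⟨hpq, h⟩
    refine ⟨hpq, fun hp => by_contra fun hq => h hpq p q rfl hp hq, fun hq => ?_⟩
    exact by_contra fun hp => h hpq q p Sym2.eq_swap hq hp
  · rintro ⟨hpq, hiff⟩
    refine ⟨hpq, fun _ u v he hu hv => ?_⟩
    rcases Sym2.eq_iff.1 he with ⟨rfl, rfl⟩ | ⟨rfl, rfl⟩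
    · exact hv (hiff.1 hu)
    · exact hv (hiff.2 hu)

lemma isRestrictedEdgeCut_cutEdges {K : Set α} {x y : α} (hx : x ∈ K) (hy : y ∉ K)
    (hside : ∀ u, ∃ w, G.Adj u w ∧ (u ∈ K ↔ w ∈ K)) : IsRestrictedEdgeCut G (cutEdges G K) := by
  refine ⟨fun e he => he.1, ?_, ?_⟩
  · refine not_connected_of_adj_closed (K := K) (fun p q hpq hp => ?_) hx hy
    exact (deleteEdges_cutEdges_adj.1 hpq).2.1 hp
  · refine ConnectedComponent.supp_nontrivial_of_forall_exists_adj fun u => ?_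
    obtain ⟨w, huw, hiff⟩ := hside u
    exact ⟨w, deleteEdges_cutEdges_adj.2 ⟨huw, hiff⟩⟩

lemma cutEdges_subset_of_adj_closed {F : Set (Sym2 α)} {K : Set α}
    (hK : ∀ ⦃p q⦄, (G.deleteEdges F).Adj p q → p ∈ K → q ∈ K) : cutEdges G K ⊆ F := by
  rintro _ ⟨he, p, q, rfl, hp, hq⟩
  by_contra hF
  exact hq (hK (deleteEdges_adj.2 ⟨he, hF⟩) hp)

lemma restrictedEdgeConn_le {F : Finset (Sym2 α)} (hF : IsRestrictedEdgeCut G F) :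
    restrictedEdgeConn G ≤ #F :=
  sInf_le ⟨F, hF, rfl⟩

variable [Fintype α] [DecidableEq α] [DecidableRel G.Adj]

variable (G) in
def cutEdgeFinset (K : Finset α) : Finset (Sym2 α) :=
  K.biUnion fun u => {v ∈ G.neighborFinset u | v ∉ K}.image fun v => s(u, v)

lemma coe_cutEdgeFinset (K : Finset α) :
    (G.cutEdgeFinset K : Set (Sym2 α)) = cutEdges G K := by
  ext e
  simp only [cutEdgeFinset, coe_biUnion, coe_image, coe_filter, mem_neighborFinset,
    Set.mem_iUnion, Set.mem_image, Set.mem_ofPred_eq, cutEdges, mem_coe, exists_prop]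
  constructor
  · rintro ⟨u, hu, v, ⟨huv, hv⟩, rfl⟩
    exact ⟨huv, u, v, rfl, hu, hv⟩
  · rintro ⟨he, u, v, rfl, hu, hv⟩
    exact ⟨u, hu, v, ⟨he, hv⟩, rfl⟩

lemma card_cutEdgeFinset (K : Finset α) :
    #(G.cutEdgeFinset K) = ∑ u ∈ K, #{v ∈ G.neighborFinset u | v ∉ K} := by
  rw [cutEdgeFinset, card_biUnion]
  · exact sum_congr rfl fun u _ => card_image_of_injective _ fun _ _ => Sym2.congr_right.1
  · intro u hu u' _ hne
    show Disjoint _ _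
    simp only [Finset.disjoint_left, mem_image, mem_filter, not_exists, not_and]
    rintro _ ⟨v, -, rfl⟩ w ⟨-, hw⟩ he
    rcases Sym2.eq_iff.1 he with ⟨h, -⟩ | ⟨-, rfl⟩
    · exact hne h.symm
    · exact hw hu

lemma card_cutEdgeFinset_pair {x y : α} (hxy : G.Adj x y) :
    #(G.cutEdgeFinset {x, y}) = G.degree x + G.degree y - 2 := by
  have hrest : ∀ {p q : α}, G.Adj p q →
      {r ∈ G.neighborFinset p | r ∉ ({p, q} : Finset α)} = (G.neighborFinset p).erase q := by
    intro p q hpq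
    ext r
    simp only [mem_filter, mem_neighborFinset, mem_insert, mem_singleton, not_or, mem_erase]
    exact ⟨fun ⟨hr, _, hrq⟩ => ⟨hrq, hr⟩, fun ⟨hrq, hr⟩ => ⟨hr, hr.ne', hrq⟩⟩
  rw [card_cutEdgeFinset, sum_pair hxy.ne, hrest hxy, pair_comm, hrest hxy.symm,
    card_erase_of_mem (by simpa using hxy), card_erase_of_mem (by simpa using hxy.symm),
    card_neighborFinset_eq_degree, card_neighborFinset_eq_degree]
  have hx := (G.degree_pos_iff_exists_adj x).2 ⟨y, hxy⟩
  have hy := (G.degree_pos_iff_exists_adj y).2 ⟨x, hxy.symm⟩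
  omega

end Cuts

section Degrees
variable {V : Type*} [Fintype V] {G : SimpleGraph V} [DecidableRel G.Adj]

lemma ncard_neighborSet_eq_degree (u : V) : (G.neighborSet u).ncard = G.degree u := by
  rw [← card_neighborFinset_eq_degree, neighborFinset_def, Set.ncard_eq_toFinset_card']

lemma minEdgeDegree_add_two_le {u v : V} (huv : G.Adj u v) :
    minEdgeDegree G + 2 ≤ G.degree u + G.degree v := by
  have hle : minEdgeDegree G ≤ G.degree u + G.degree v - 2 :=
    Nat.sInf_le ⟨u, v, huv, by simp only [ncard_neighborSet_eq_degree]⟩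
  have hu := (G.degree_pos_iff_exists_adj u).2 ⟨v, huv⟩
  have hv := (G.degree_pos_iff_exists_adj v).2 ⟨u, huv.symm⟩
  omega

lemma exists_adj_degree_add_degree_eq_minEdgeDegree {u v : V} (huv : G.Adj u v) :
    ∃ u v, G.Adj u v ∧ G.degree u + G.degree v = minEdgeDegree G + 2 := by
  obtain ⟨u, v, huv, hξ⟩ := Nat.sInf_mem (s := {k | ∃ u v, G.Adj u v ∧
    (G.neighborSet u).ncard + (G.neighborSet v).ncard - 2 = k}) ⟨_, u, v, huv, rfl⟩
  rw [ncard_neighborSet_eq_degree, ncard_neighborSet_eq_degree] at hξ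
  have hu := (G.degree_pos_iff_exists_adj u).2 ⟨v, huv⟩
  have hv := (G.degree_pos_iff_exists_adj v).2 ⟨u, huv.symm⟩
  exact ⟨u, v, huv, by rw [minEdgeDegree, ← hξ]; omega⟩

lemma sum_sum_neighborFinset_eq_sum_adj (f : V → V → ℕ) :
    ∑ x, ∑ y ∈ G.neighborFinset x, f x y =
      ∑ p ∈ ({p | G.Adj p.1 p.2} : Finset (V × V)), f p.1 p.2 := by
  rw [sum_filter, ← univ_product_univ, sum_product]
  simp only [neighborFinset_eq_filter, sum_filter]

lemma sum_sum_neighborFinset_comm (f : V → V → ℕ) :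
    ∑ x, ∑ y ∈ G.neighborFinset x, f x y = ∑ x, ∑ y ∈ G.neighborFinset x, f y x := by
  simp only [neighborFinset_eq_filter, sum_filter]
  rw [sum_comm]
  simp only [adj_comm]

lemma sum_star_add_sum_star_le [DecidableEq V] (f : V → V → ℕ) {u v : V} (huv : u ≠ v) :
    ∑ w ∈ G.neighborFinset u, (f u w + f w u) +
        ∑ w ∈ (G.neighborFinset v).erase u, (f v w + f w v)
      ≤ ∑ x, ∑ y ∈ G.neighborFinset x, f x y := by
  rw [sum_add_swap_eq_sum_union_image f (by simp), sum_add_swap_eq_sum_union_image f (by simp),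
    sum_sum_neighborFinset_eq_sum_adj, ← sum_union]
  · refine sum_le_sum_of_subset fun p hp => ?_
    simp only [mem_union, mem_image, mem_erase, mem_neighborFinset] at hp
    simp only [mem_filter, mem_univ, true_and]
    rcases hp with (⟨w, h, rfl⟩ | ⟨w, h, rfl⟩) | (⟨w, ⟨-, h⟩, rfl⟩ | ⟨w, ⟨-, h⟩, rfl⟩)
    all_goals first | exact h | exact h.symm
  · simp only [Finset.disjoint_left, mem_union, mem_image, mem_erase, not_or, not_exists, not_and]
    rintro _ (⟨w, -, rfl⟩ | ⟨w, -, rfl⟩) <;>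
      refine ⟨fun w' hw' h => ?_, fun w' hw' h => ?_⟩ <;> simp only [Prod.ext_iff] at h <;>
      grind

end Degrees

end SimpleGraph

section Fibers
variable {V : Type*} [DecidableEq V] {n : ℕ}

variable (n) in
def fiberCard (K : Finset (V × Fin n)) (u : V) : ℕ := #{i | (u, i) ∈ K}

lemma fiberCard_le (K : Finset (V × Fin n)) (u : V) : fiberCard n K u ≤ n :=
  (card_filter_le _ _).trans (by simp)

lemma fiberCard_pos_iff {K : Finset (V × Fin n)} {u : V} :
    0 < fiberCard n K u ↔ ∃ i, (u, i) ∈ K := by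
  simp [fiberCard, card_pos, Finset.Nonempty]

lemma eq_of_fiberCard_le_one {K : Finset (V × Fin n)} {u : V} (h : fiberCard n K u ≤ 1)
    {i j : Fin n} (hi : (u, i) ∈ K) (hj : (u, j) ∈ K) : i = j :=
  card_le_one.1 h i (by simpa using hi) j (by simpa using hj)

variable [Fintype V]

lemma fiberCard_compl (K : Finset (V × Fin n)) (u : V) :
    fiberCard n Kᶜ u = n - fiberCard n K u := by
  have h := card_filter_add_card_filter_not (s := (univ : Finset (Fin n))) (fun i => (u, i) ∈ K)
  simp only [card_univ, Fintype.card_fin] at h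
  simp only [fiberCard, mem_compl]
  omega

lemma sum_fst_eq_sum_fiberCard_mul (K : Finset (V × Fin n)) (h : V → ℕ) :
    ∑ p ∈ K, h p.1 = ∑ u, fiberCard n K u * h u := by
  simp only [fiberCard, card_filter, sum_mul, ite_mul, one_mul, zero_mul]
  rw [← Fintype.sum_prod_type' (fun u i => if (u, i) ∈ K then h u else 0), ← sum_filter]
  simp

end Fibers

section TotalProd
variable {V : Type*} [Fintype V] (G : SimpleGraph V) [DecidableRel G.Adj] (n : ℕ)

instance : DecidableRel (totalProd G n).Adj := fun x y =>
  inferInstanceAs (Decidable (G.Adj x.1 y.1))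

lemma totalProd_neighborFinset (x : V × Fin n) :
    (totalProd G n).neighborFinset x = G.neighborFinset x.1 ×ˢ univ := by
  ext y
  simp only [mem_neighborFinset, mem_product, mem_univ, and_true]
  rfl

lemma totalProd_degree (x : V × Fin n) : (totalProd G n).degree x = G.degree x.1 * n := by
  rw [← card_neighborFinset_eq_degree, totalProd_neighborFinset, card_product, card_univ,
    Fintype.card_fin, card_neighborFinset_eq_degree]

def crossWeight (a : V → ℕ) : ℕ := ∑ u, ∑ v ∈ G.neighborFinset u, a u * (n - a v)

lemma card_cutEdgeFinset_totalProd [DecidableEq V] (K : Finset (V × Fin n)) :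
    #((totalProd G n).cutEdgeFinset K) = crossWeight G n (fiberCard n K) := by
  have hrow : ∀ p : V × Fin n, #{q ∈ (totalProd G n).neighborFinset p | q ∉ K} =
      ∑ v ∈ G.neighborFinset p.1, (n - fiberCard n K v) := by
    intro p
    rw [totalProd_neighborFinset, card_filter, sum_product]
    refine sum_congr rfl fun v _ => ?_
    rw [← card_filter, ← fiberCard_compl]
    simp only [fiberCard, mem_compl]
  rw [card_cutEdgeFinset, sum_congr rfl fun p _ => hrow p,
    sum_fst_eq_sum_fiberCard_mul K fun u => ∑ v ∈ G.neighborFinset u, (n - fiberCard n K v)]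
  simp only [crossWeight, mul_sum]

variable {G n}

lemma restrictedEdgeConn_totalProd_le [DecidableEq V] [Nonempty V] (hG : ∀ u, ∃ w, G.Adj u w)
    (hn : 2 ≤ n) :
    restrictedEdgeConn (totalProd G n) ≤ (n * minEdgeDegree G + 2 * (n - 1) : ℕ) := by
  obtain ⟨w₀, hw₀⟩ := hG (Classical.arbitrary V)
  obtain ⟨u, v, huv, hdeg⟩ := exists_adj_degree_add_degree_eq_minEdgeDegree hw₀
  let x : V × Fin n := (u, ⟨0, by omega⟩)
  let y : V × Fin n := (v, ⟨0, by omega⟩)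
  have hxy : (totalProd G n).Adj x y := huv
  have hcut : IsRestrictedEdgeCut (totalProd G n) ((totalProd G n).cutEdgeFinset {x, y}) := by
    rw [coe_cutEdgeFinset]
    refine isRestrictedEdgeCut_cutEdges (x := x) (y := (u, ⟨1, by omega⟩)) (by simp)
      (by simp [x, y]) fun p => ?_
    by_cases hp : p = x ∨ p = y
    · rcases hp with rfl | rfl
      · exact ⟨y, hxy, by simp⟩
      · exact ⟨x, hxy.symm, by simp⟩
    · obtain ⟨w, hw⟩ := hG p.1
      exact ⟨(w, ⟨1, by omega⟩), hw, by simp [hp, x, y]⟩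
  calc restrictedEdgeConn (totalProd G n)
      ≤ #((totalProd G n).cutEdgeFinset {x, y}) := restrictedEdgeConn_le hcut
    _ = (n * minEdgeDegree G + 2 * (n - 1) : ℕ) := by
      rw [card_cutEdgeFinset_pair hxy, totalProd_degree, totalProd_degree, ← add_mul, hdeg]
      have : (minEdgeDegree G + 2) * n = n * minEdgeDegree G + 2 * n := by ring
      congr 1
      omega

end TotalProd

section PairWeight
variable {V : Type*} {n : ℕ} {a : V → ℕ} {x y : V}

def pairWeight (n : ℕ) (a : V → ℕ) (x y : V) : ℕ := a x * (n - a y) + a y * (n - a x)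

lemma le_pairWeight (hx : 0 < a x) (hxn : a x < n) (hy : a y ≤ n) : n ≤ pairWeight n a x y := by
  have h₁ : n - a y ≤ a x * (n - a y) := Nat.le_mul_of_pos_left _ hx
  have h₂ : a y ≤ a y * (n - a x) := Nat.le_mul_of_pos_right _ (by omega)
  rw [pairWeight]
  omega

lemma two_mul_sub_two_le_pairWeight (hx : a x = 1) (hy : 0 < a y) (hyn : a y ≤ n) :
    2 * n - 2 ≤ pairWeight n a x y := by
  rw [pairWeight, hx]
  rcases Nat.lt_or_ge n 2 with hn | hn
  · omega
  have key : 1 * (n - a y) + a y * (n - 1) = (a y - 1) * (n - 2) + (2 * n - 2) := by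
    zify [hy, hyn, hn, (by omega : 1 ≤ n), (by omega : 2 ≤ 2 * n)]
    ring
  omega

/-- For split `x, y` the pair weight exceeds `2n - 2` by `(a x - 1)(n - 1 - a y) +
(a y - 1)(n - 1 - a x)`. -/
lemma eq_one_or_eq_sub_one_of_pairWeight_lt (hn : 3 ≤ n) (hx : 0 < a x) (hxn : a x < n)
    (hy : 0 < a y) (hyn : a y < n) (h : pairWeight n a x y < 2 * n - 1) :
    (a x = 1 ∧ a y = 1) ∨ (a x = n - 1 ∧ a y = n - 1) := by
  have key : pairWeight n a x y =
      (a x - 1) * (n - 1 - a y) + (a y - 1) * (n - 1 - a x) + (2 * n - 2) := by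
    rw [pairWeight]
    zify [hx, hy, hxn.le, hyn.le, (by omega : a y ≤ n - 1), (by omega : a x ≤ n - 1),
      (by omega : 1 ≤ n), (by omega : 2 ≤ 2 * n)]
    ring
  have h₁ : (a x - 1) * (n - 1 - a y) = 0 := by omega
  have h₂ : (a y - 1) * (n - 1 - a x) = 0 := by omega
  rcases Nat.mul_eq_zero.1 h₁ with h₁ | h₁ <;> rcases Nat.mul_eq_zero.1 h₂ with h₂ | h₂ <;> omega

end PairWeight

lemma sq_mul_min_le {n x e f : ℕ} (hx : x ≤ n) :
    n ^ 2 * min e f ≤ f * (n * (n - x)) + e * (x * n) := by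
  have hn : n ^ 2 = (n - x) * n + x * n := by
    rw [← add_mul, Nat.sub_add_cancel hx, sq]
  rw [hn, add_mul]
  gcongr ?_ + ?_
  · calc (n - x) * n * min e f ≤ (n - x) * n * f := by gcongr; exact min_le_right _ _
      _ = f * (n * (n - x)) := by ring
  · calc x * n * min e f ≤ x * n * e := by gcongr; exact min_le_left _ _
      _ = e * (x * n) := by ring

section CrossWeight
variable {V : Type*} [Fintype V] {G : SimpleGraph V} [DecidableRel G.Adj] {n : ℕ} {a : V → ℕ}

lemma crossWeight_tsub (ha : ∀ u, a u ≤ n) :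
    crossWeight G n (fun u => n - a u) = crossWeight G n a := by
  rw [crossWeight, crossWeight, sum_sum_neighborFinset_comm]
  refine sum_congr rfl fun u _ => sum_congr rfl fun v _ => ?_
  rw [Nat.sub_sub_self (ha u), mul_comm]

variable [DecidableEq V]

lemma sum_pairWeight_add_sum_pairWeight_le {u v : V} (huv : u ≠ v) :
    ∑ w ∈ G.neighborFinset u, pairWeight n a u w +
      ∑ w ∈ (G.neighborFinset v).erase u, pairWeight n a v w ≤ crossWeight G n a :=
  sum_star_add_sum_star_le (fun x y => a x * (n - a y)) huv

lemma add_le_crossWeight_of_adj {u v : V} (huv : G.Adj u v)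
    (h : (G.degree u + G.degree v) * n ≤ ∑ w ∈ G.neighborFinset u, pairWeight n a u w +
      ∑ w ∈ (G.neighborFinset v).erase u, pairWeight n a v w + 1) :
    n * minEdgeDegree G + 2 * n ≤ crossWeight G n a + 1 :=
  calc n * minEdgeDegree G + 2 * n = (minEdgeDegree G + 2) * n := by ring
    _ ≤ (G.degree u + G.degree v) * n := Nat.mul_le_mul_right _ (minEdgeDegree_add_two_le huv)
    _ ≤ _ := h
    _ ≤ crossWeight G n a + 1 := by gcongr; exact sum_pairWeight_add_sum_pairWeight_le huv.ne

end CrossWeight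

/-- The fibre counts `a u = #{i | (u, i) ∈ A}` of a vertex set `A` of `G × Tₙ` that is a union of
components of some `(G × Tₙ) − F`, each of which has at least three vertices. -/
structure IsThickProfile {V : Type*} (G : SimpleGraph V) (a : V → ℕ) : Prop where
  exists_adj_pos : ∀ u, 0 < a u → ∃ w, G.Adj u w ∧ 0 < a w
  exists_third : ∀ u v, G.Adj u v → a u = 1 → a v = 1 →
    ∃ w, (G.Adj u w ∨ G.Adj v w) ∧ w ≠ u ∧ w ≠ v ∧ 0 < a w

lemma IsThickProfile.exists_adj_lt {V : Type*} {G : SimpleGraph V} {n : ℕ} {a : V → ℕ}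
    (hB : IsThickProfile G fun w => n - a w) {u : V} (hu : a u < n) :
    ∃ w, G.Adj u w ∧ a w < n := by
  obtain ⟨w, huw, hw⟩ := hB.exists_adj_pos u (Nat.sub_pos_of_lt hu)
  exact ⟨w, huw, Nat.lt_of_sub_pos hw⟩

section AdjacentSplit
variable {V : Type*} [Fintype V] [DecidableEq V] {G : SimpleGraph V} [DecidableRel G.Adj]
  {n : ℕ} {a : V → ℕ} {u v : V}

lemma add_le_crossWeight_of_heavy_edge (ha : ∀ w, a w ≤ n) (huv : G.Adj u v)
    (hu : 0 < a u) (hun : a u < n) (hv : 0 < a v) (hvn : a v < n)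
    (h : 2 * n - 1 ≤ pairWeight n a u v) :
    n * minEdgeDegree G + 2 * n ≤ crossWeight G n a + 1 := by
  refine add_le_crossWeight_of_adj huv ?_
  have hsum_u := add_card_sub_one_mul_le_sum (f := pairWeight n a u)
    (fun w _ => le_pairWeight hu hun (ha w)) ((G.mem_neighborFinset _ _).2 huv)
  have hsum_v := card_sub_one_mul_le_sum_erase (f := pairWeight n a v)
    (fun w _ => le_pairWeight hv hvn (ha w)) ((G.mem_neighborFinset _ _).2 huv.symm)
  rw [card_neighborFinset_eq_degree, Nat.sub_one_mul] at hsum_u hsum_v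
  have := Nat.le_mul_of_pos_left n ((G.degree_pos_iff_exists_adj u).2 ⟨v, huv⟩)
  have := Nat.le_mul_of_pos_left n ((G.degree_pos_iff_exists_adj v).2 ⟨u, huv.symm⟩)
  rw [add_mul]
  omega

lemma add_le_crossWeight_of_two_heavy_edges (hn : 3 ≤ n) (ha : ∀ w, a w ≤ n) (huv : G.Adj u v)
    (hu : 0 < a u) (hun : a u < n) (hv : 0 < a v) (hvn : a v < n) {w : V} (huw : G.Adj u w)
    (hwv : w ≠ v) (h₁ : 2 * n - 2 ≤ pairWeight n a u v) (h₂ : 2 * n - 2 ≤ pairWeight n a u w) :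
    n * minEdgeDegree G + 2 * n ≤ crossWeight G n a + 1 := by
  refine add_le_crossWeight_of_adj huv ?_
  have hv_mem := (G.mem_neighborFinset _ _).2 huv
  have hw_mem := (G.mem_neighborFinset _ _).2 huw
  have hsum_u := add_add_card_sub_two_mul_le_sum (f := pairWeight n a u)
    (fun w _ => le_pairWeight hu hun (ha w)) hv_mem hw_mem hwv.symm
  have hsum_v := card_sub_one_mul_le_sum_erase (f := pairWeight n a v)
    (fun w _ => le_pairWeight hv hvn (ha w)) ((G.mem_neighborFinset _ _).2 huv.symm)
  have hdu : 2 ≤ G.degree u := one_lt_card.2 ⟨v, hv_mem, w, hw_mem, hwv.symm⟩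
  rw [card_neighborFinset_eq_degree, Nat.sub_mul] at hsum_u
  rw [card_neighborFinset_eq_degree, Nat.sub_one_mul] at hsum_v
  have := Nat.mul_le_mul_right n hdu
  have := Nat.le_mul_of_pos_left n ((G.degree_pos_iff_exists_adj v).2 ⟨u, huv.symm⟩)
  rw [add_mul]
  omega

lemma add_le_crossWeight_of_adj_eq_one (hn : 3 ≤ n) (ha : ∀ w, a w ≤ n)
    (hA : IsThickProfile G a) (huv : G.Adj u v) (hu : a u = 1) (hv : a v = 1) :
    n * minEdgeDegree G + 2 * n ≤ crossWeight G n a + 1 := by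
  obtain ⟨w, huw | hvw, hwu, hwv, hw⟩ := hA.exists_third u v huv hu hv
  · exact add_le_crossWeight_of_two_heavy_edges hn ha huv (by omega) (by omega) (by omega)
      (by omega) huw hwv (two_mul_sub_two_le_pairWeight hu (by omega) (ha v))
      (two_mul_sub_two_le_pairWeight hu hw (ha w))
  · exact add_le_crossWeight_of_two_heavy_edges hn ha huv.symm (by omega) (by omega) (by omega)
      (by omega) hvw hwu (two_mul_sub_two_le_pairWeight hv (by omega) (ha u))
      (two_mul_sub_two_le_pairWeight hv hw (ha w))

lemma add_le_crossWeight_of_adj_split (hn : 3 ≤ n) (ha : ∀ w, a w ≤ n)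
    (hA : IsThickProfile G a) (hB : IsThickProfile G fun w => n - a w) (huv : G.Adj u v)
    (hu : 0 < a u) (hun : a u < n) (hv : 0 < a v) (hvn : a v < n) :
    n * minEdgeDegree G + 2 * n ≤ crossWeight G n a + 1 := by
  by_cases heavy : 2 * n - 1 ≤ pairWeight n a u v
  · exact add_le_crossWeight_of_heavy_edge ha huv hu hun hv hvn heavy
  rcases eq_one_or_eq_sub_one_of_pairWeight_lt hn hu hun hv hvn (by omega)
    with ⟨hu1, hv1⟩ | ⟨hu1, hv1⟩
  · exact add_le_crossWeight_of_adj_eq_one hn ha hA huv hu1 hv1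
  · rw [← crossWeight_tsub ha]
    exact add_le_crossWeight_of_adj_eq_one hn (fun _ => Nat.sub_le _ _) hB huv (by omega)
      (by omega)

end AdjacentSplit

section SplitIndependent
variable {V : Type*} [Fintype V] {G : SimpleGraph V} [DecidableRel G.Adj] {n : ℕ} {a : V → ℕ}

variable (G) in
def nbrCount (a : V → ℕ) (k : ℕ) (u : V) : ℕ := #{w ∈ G.neighborFinset u | a w = k}

variable (G n a) in
def majoritySide : Finset V :=
  {u | a u = n ∨ (0 < a u ∧ a u < n ∧ nbrCount G a 0 u ≤ nbrCount G a n u)}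

lemma card_bipartiteBelow_adj_eq_nbrCount (k : ℕ) (w : V) :
    #(({u | a u = k} : Finset V).bipartiteBelow G.Adj w) = nbrCount G a k w := by
  congr 1
  ext u
  simp [bipartiteBelow, adj_comm, and_comm]

lemma mem_majoritySide {u : V} : u ∈ majoritySide G n a ↔
    a u = n ∨ (0 < a u ∧ a u < n ∧ nbrCount G a 0 u ≤ nbrCount G a n u) := by
  simp [majoritySide]

lemma sum_filter_neighborFinset_eq_nbrCount_mul (h : ℕ → ℕ) (k : ℕ) (u : V) :
    ∑ w ∈ G.neighborFinset u with a w = k, h (a w) = nbrCount G a k u * h k := by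
  rw [sum_congr rfl fun w hw => by rw [(mem_filter.1 hw).2], sum_const, smul_eq_mul, nbrCount]

variable [DecidableEq V]

lemma add_le_crossWeight_of_full_of_forall_adj_lt (hn : 3 ≤ n) (ha : ∀ w, a w ≤ n)
    (hA : IsThickProfile G a) (hB : IsThickProfile G fun w => n - a w)
    (hsplit : ∀ u w, G.Adj u w → 0 < a u → a u < n → a w = 0 ∨ a w = n)
    {v : V} (hv : a v = n) (hnbr : ∀ w, G.Adj v w → a w < n) :
    n * minEdgeDegree G + 2 * n ≤ crossWeight G n a + 1 := by
  obtain ⟨w, hvw, hw⟩ := hA.exists_adj_pos v (by omega)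
  have hwn := hnbr w hvw
  obtain ⟨z, hwz, hz⟩ := hB.exists_adj_lt hwn
  have hz0 : a z = 0 := (hsplit w z hwz hw hwn).resolve_right hz.ne
  have hzv : z ≠ v := by rintro rfl; omega
  refine add_le_crossWeight_of_adj hvw.symm ?_
  have hsum_w := add_add_card_sub_two_mul_le_sum (f := pairWeight n a w)
    (fun y _ => le_pairWeight hw hwn (ha y)) ((G.mem_neighborFinset _ _).2 hwz)
    ((G.mem_neighborFinset _ _).2 hvw.symm) hzv
  have hsum_v := card_sub_one_mul_le_sum_erase (f := pairWeight n a v) (c := n)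
    (fun y hy => by
      have := hnbr y ((G.mem_neighborFinset _ _).1 hy)
      simp only [pairWeight, hv, Nat.sub_self, mul_zero, add_zero]
      exact Nat.le_mul_of_pos_right n (by omega))
    ((G.mem_neighborFinset _ _).2 hvw)
  have hpair : pairWeight n a w z + pairWeight n a w v = n * n := by
    simp only [pairWeight, hz0, hv, Nat.sub_zero, Nat.sub_self, zero_mul, mul_zero, add_zero,
      zero_add]
    rw [mul_comm n (n - a w), ← add_mul, Nat.add_sub_cancel' (ha w)]
  have hdw : 2 ≤ G.degree w := one_lt_card.2 ⟨z, (G.mem_neighborFinset _ _).2 hwz, v,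
    (G.mem_neighborFinset _ _).2 hvw.symm, hzv⟩
  rw [card_neighborFinset_eq_degree, Nat.sub_mul] at hsum_w
  rw [card_neighborFinset_eq_degree, Nat.sub_one_mul] at hsum_v
  have := Nat.mul_le_mul_right n hdw
  have := Nat.le_mul_of_pos_left n ((G.degree_pos_iff_exists_adj v).2 ⟨w, hvw⟩)
  have := Nat.mul_le_mul_right n hn
  rw [add_mul]
  omega

lemma card_filter_not_mem_majoritySide_le (ha : ∀ w, a w ≤ n) (u : V) :
    #{w ∈ G.neighborFinset u | w ∉ majoritySide G n a} ≤ nbrCount G a 0 u +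
      #(({w | 0 < a w ∧ a w < n} : Finset V) |>.filter (· ∉ majoritySide G n a)
        |>.bipartiteAbove G.Adj u) := by
  refine (card_le_card fun w hw => ?_).trans (card_union_le _ _)
  simp only [mem_filter, mem_neighborFinset, mem_majoritySide, not_or, not_and, not_le] at hw
  simp only [mem_union, mem_filter, mem_neighborFinset, mem_bipartiteAbove, mem_univ, true_and,
    mem_majoritySide, not_or, not_and, not_le]
  have := ha w
  by_cases hw0 : a w = 0
  · exact Or.inl ⟨hw.1, hw0⟩
  · exact Or.inr ⟨⟨⟨by omega, by omega⟩, hw.2.1, hw.2.2⟩, hw.1⟩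

lemma card_filter_not_mem_majoritySide_le_of_split
    (hsplit : ∀ u w, G.Adj u w → 0 < a u → a u < n → a w = 0 ∨ a w = n) {u : V}
    (hu : 0 < a u) (hun : a u < n) (he : nbrCount G a 0 u ≤ nbrCount G a n u) :
    #{w ∈ G.neighborFinset u | w ∉ majoritySide G n a} ≤
      min (nbrCount G a 0 u) (nbrCount G a n u) := by
  rw [min_eq_left he]
  refine card_le_card fun w hw => ?_
  simp only [mem_filter, mem_neighborFinset, mem_majoritySide, not_or] at hw ⊢
  exact ⟨hw.1, (hsplit u w hw.1 hu hun).resolve_right hw.2.1⟩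

lemma card_cutEdgeFinset_majoritySide_le (ha : ∀ w, a w ≤ n)
    (hsplit : ∀ u w, G.Adj u w → 0 < a u → a u < n → a w = 0 ∨ a w = n) :
    #(G.cutEdgeFinset (majoritySide G n a)) ≤ ∑ u ∈ ({u | a u = n} : Finset V), nbrCount G a 0 u +
      ∑ u ∈ ({u | 0 < a u ∧ a u < n} : Finset V), min (nbrCount G a 0 u) (nbrCount G a n u) := by
  set P := majoritySide G n a
  set X : Finset V := {u | a u = n}
  set S : Finset V := {u | 0 < a u ∧ a u < n}
  have hPX : {u ∈ P | a u = n} = X := by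
    ext u
    simp only [mem_filter, mem_univ, true_and, X, P, mem_majoritySide]
    tauto
  have hPS : {u ∈ P | ¬ a u = n} = {u ∈ S | u ∈ P} := by
    ext u
    simp only [mem_filter, mem_univ, true_and, S, P, mem_majoritySide]
    have := ha u
    constructor
    · rintro ⟨h | h, hne⟩ <;> tauto
    · rintro ⟨⟨-, hun⟩, h⟩
      exact ⟨h, hun.ne⟩
  rw [card_cutEdgeFinset, ← sum_filter_add_sum_filter_not P (fun u => a u = n), hPX, hPS,
    ← sum_filter_add_sum_filter_not S (· ∈ P) fun u => min (nbrCount G a 0 u) (nbrCount G a n u)]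
  have hX : ∑ u ∈ X, #{w ∈ G.neighborFinset u | w ∉ P} ≤
      ∑ u ∈ X, nbrCount G a 0 u + ∑ w ∈ S with w ∉ P, #(X.bipartiteBelow G.Adj w) := by
    rw [← sum_card_bipartiteAbove_eq_sum_card_bipartiteBelow, ← sum_add_distrib]
    exact sum_le_sum fun u _ => card_filter_not_mem_majoritySide_le ha u
  have hSY : ∑ w ∈ S with w ∉ P, #(X.bipartiteBelow G.Adj w) =
      ∑ w ∈ S with w ∉ P, min (nbrCount G a 0 w) (nbrCount G a n w) := by
    refine sum_congr rfl fun w hw => ?_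
    simp only [mem_filter, S, P, mem_univ, true_and, mem_majoritySide, not_or] at hw
    rw [card_bipartiteBelow_adj_eq_nbrCount,
      min_eq_right (le_of_not_ge fun h => hw.2.2 ⟨hw.1.1, hw.1.2, h⟩)]
  have hSP : ∑ u ∈ S with u ∈ P, #{w ∈ G.neighborFinset u | w ∉ P} ≤
      ∑ u ∈ S with u ∈ P, min (nbrCount G a 0 u) (nbrCount G a n u) := by
    refine sum_le_sum fun u hu => ?_
    simp only [mem_filter, S, P, mem_univ, true_and, mem_majoritySide] at hu
    exact card_filter_not_mem_majoritySide_le_of_split hsplit hu.1.1 hu.1.2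
      (hu.2.resolve_left hu.1.2.ne).2.2
  omega

lemma sq_mul_le_crossWeight (ha : ∀ w, a w ≤ n) :
    n ^ 2 * (∑ u ∈ ({u | a u = n} : Finset V), nbrCount G a 0 u +
      ∑ u ∈ ({u | 0 < a u ∧ a u < n} : Finset V), min (nbrCount G a 0 u) (nbrCount G a n u)) ≤
      crossWeight G n a := by
  set X : Finset V := {u | a u = n}
  set S : Finset V := {u | 0 < a u ∧ a u < n}
  have hrowX : ∀ u ∈ X, nbrCount G a 0 u * (n * n) + ∑ w ∈ S.bipartiteAbove G.Adj u, n * (n - a w)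
      ≤ ∑ w ∈ G.neighborFinset u, a u * (n - a w) := by
    intro u hu
    have hdisj : Disjoint {w ∈ G.neighborFinset u | a w = 0} (S.bipartiteAbove G.Adj u) := by
      simp only [Finset.disjoint_left, mem_filter, mem_bipartiteAbove, S, mem_univ, true_and]
      omega
    rw [(mem_filter.1 hu).2]
    calc nbrCount G a 0 u * (n * n) + ∑ w ∈ S.bipartiteAbove G.Adj u, n * (n - a w)
        = ∑ w ∈ {w ∈ G.neighborFinset u | a w = 0} ∪ S.bipartiteAbove G.Adj u, n * (n - a w) := by
          rw [sum_union hdisj, sum_filter_neighborFinset_eq_nbrCount_mul (fun x => n * (n - x)),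
            Nat.sub_zero]
      _ ≤ _ := by
          refine sum_le_sum_of_subset fun w hw => ?_
          simp only [mem_union, mem_filter, mem_bipartiteAbove, mem_neighborFinset] at hw ⊢
          tauto
  have hrowS : ∀ u ∈ S,
      nbrCount G a 0 u * (a u * n) ≤ ∑ w ∈ G.neighborFinset u, a u * (n - a w) := by
    intro u _
    calc nbrCount G a 0 u * (a u * n)
        = ∑ w ∈ G.neighborFinset u with a w = 0, a u * (n - a w) := by
          rw [sum_filter_neighborFinset_eq_nbrCount_mul (fun x => a u * (n - x)), Nat.sub_zero]
      _ ≤ _ := sum_le_sum_of_subset (filter_subset _ _)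
  have hswap : ∑ u ∈ X, ∑ w ∈ S.bipartiteAbove G.Adj u, n * (n - a w) =
      ∑ w ∈ S, nbrCount G a n w * (n * (n - a w)) := by
    rw [sum_sum_bipartiteAbove_eq_sum_sum_bipartiteBelow]
    exact sum_congr rfl fun w _ => by
      rw [sum_const, smul_eq_mul, card_bipartiteBelow_adj_eq_nbrCount]
  have hXS : Disjoint X S := by
    simp only [Finset.disjoint_left, mem_filter, mem_univ, true_and, X, S]
    omega
  calc n ^ 2 * (∑ u ∈ X, nbrCount G a 0 u + ∑ u ∈ S, min (nbrCount G a 0 u) (nbrCount G a n u))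
      ≤ ∑ u ∈ X, nbrCount G a 0 u * (n * n) + ∑ u ∈ S, (nbrCount G a n u * (n * (n - a u)) +
          nbrCount G a 0 u * (a u * n)) := by
        rw [mul_add, mul_sum, mul_sum]
        exact add_le_add (sum_le_sum fun u _ => le_of_eq (by ring))
          (sum_le_sum fun u _ => sq_mul_min_le (ha u))
    _ ≤ ∑ u ∈ X ∪ S, ∑ w ∈ G.neighborFinset u, a u * (n - a w) := by
        rw [sum_union hXS, sum_add_distrib, ← add_assoc, ← hswap, ← sum_add_distrib]
        exact add_le_add (sum_le_sum hrowX) (sum_le_sum hrowS)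
    _ ≤ crossWeight G n a := sum_le_sum_of_subset (subset_univ _)

lemma isRestrictedEdgeCut_majoritySide (ha : ∀ w, a w ≤ n)
    (hA : IsThickProfile G a) (hB : IsThickProfile G fun w => n - a w)
    (hsplit : ∀ u w, G.Adj u w → 0 < a u → a u < n → a w = 0 ∨ a w = n)
    (hfull : ∀ v, a v = n → ∃ w, G.Adj v w ∧ a w = n)
    (hempty : ∀ v, a v = 0 → ∃ w, G.Adj v w ∧ a w = 0)
    (hpos : ∃ u, 0 < a u) (hlt : ∃ u, a u < n) :
    IsRestrictedEdgeCut G (G.cutEdgeFinset (majoritySide G n a)) := by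
  have hx : ∃ x, a x = n := by
    obtain ⟨u, hu⟩ := hpos
    by_cases hun : a u = n
    · exact ⟨u, hun⟩
    obtain ⟨w, huw, hw⟩ := hA.exists_adj_pos u hu
    exact ⟨w, (hsplit u w huw hu (lt_of_le_of_ne (ha u) hun)).resolve_left hw.ne'⟩
  have hy : ∃ y, a y = 0 := by
    obtain ⟨u, hu⟩ := hlt
    by_cases hu0 : a u = 0
    · exact ⟨u, hu0⟩
    obtain ⟨w, huw, hw⟩ := hB.exists_adj_lt hu
    exact ⟨w, (hsplit u w huw (Nat.pos_of_ne_zero hu0) hu).resolve_right hw.ne⟩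
  obtain ⟨x, hx⟩ := hx
  obtain ⟨y, hy⟩ := hy
  have hn : n ≠ 0 := by obtain ⟨u, hu⟩ := hpos; have := ha u; omega
  rw [coe_cutEdgeFinset]
  refine isRestrictedEdgeCut_cutEdges (x := x) (y := y) (by simp [mem_majoritySide, hx])
    (by simp [mem_majoritySide, hy, Ne.symm hn]) fun u => ?_
  simp only [mem_coe, mem_majoritySide]
  have := ha u
  by_cases hun : a u = n
  · obtain ⟨w, huw, hw⟩ := hfull u hun
    exact ⟨w, huw, by simp [hun, hw]⟩
  by_cases hu0 : a u = 0
  · obtain ⟨w, huw, hw⟩ := hempty u hu0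
    exact ⟨w, huw, by simp [hu0, hw]⟩
  by_cases he : nbrCount G a 0 u ≤ nbrCount G a n u
  · obtain ⟨w, huw, hw⟩ := hA.exists_adj_pos u (by omega)
    have hwn := (hsplit u w huw (by omega) (by omega)).resolve_left hw.ne'
    exact ⟨w, huw, by simp only [hwn, true_or, iff_true]; omega⟩
  · obtain ⟨w, huw, hw⟩ := hB.exists_adj_lt (u := u) (by omega)
    have hw0 := (hsplit u w huw (by omega) (by omega)).resolve_right hw.ne
    exact ⟨w, huw, by simp only [hw0]; omega⟩

lemma exists_isRestrictedEdgeCut_sq_mul_card_le_crossWeight (ha : ∀ w, a w ≤ n)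
    (hA : IsThickProfile G a) (hB : IsThickProfile G fun w => n - a w)
    (hsplit : ∀ u w, G.Adj u w → 0 < a u → a u < n → a w = 0 ∨ a w = n)
    (hfull : ∀ v, a v = n → ∃ w, G.Adj v w ∧ a w = n)
    (hempty : ∀ v, a v = 0 → ∃ w, G.Adj v w ∧ a w = 0)
    (hpos : ∃ u, 0 < a u) (hlt : ∃ u, a u < n) :
    ∃ C : Finset (Sym2 V), IsRestrictedEdgeCut G C ∧ n ^ 2 * #C ≤ crossWeight G n a :=
  ⟨_, isRestrictedEdgeCut_majoritySide ha hA hB hsplit hfull hempty hpos hlt,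
    (Nat.mul_le_mul_left _ (card_cutEdgeFinset_majoritySide_le ha hsplit)).trans
      (sq_mul_le_crossWeight ha)⟩

theorem add_le_crossWeight_or_exists_isRestrictedEdgeCut (hn : 3 ≤ n) (ha : ∀ w, a w ≤ n)
    (hA : IsThickProfile G a) (hB : IsThickProfile G fun w => n - a w)
    (hpos : ∃ u, 0 < a u) (hlt : ∃ u, a u < n) :
    n * minEdgeDegree G + 2 * n ≤ crossWeight G n a + 1 ∨
      ∃ C : Finset (Sym2 V), IsRestrictedEdgeCut G C ∧ n ^ 2 * #C ≤ crossWeight G n a := by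
  by_cases hadj : ∃ u v, G.Adj u v ∧ 0 < a u ∧ a u < n ∧ 0 < a v ∧ a v < n
  · obtain ⟨u, v, huv, hu, hun, hv, hvn⟩ := hadj
    exact Or.inl (add_le_crossWeight_of_adj_split hn ha hA hB huv hu hun hv hvn)
  push Not at hadj
  have hsplit : ∀ u w, G.Adj u w → 0 < a u → a u < n → a w = 0 ∨ a w = n := by
    intro u w huw hu hun
    have := hadj u w huw hu hun
    have := ha w
    omega
  have hA' : IsThickProfile G fun w => n - (n - a w) := by
    simpa only [Nat.sub_sub_self (ha _)] using hA
  by_cases hfull : ∃ v, a v = n ∧ ∀ w, G.Adj v w → a w < n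
  · obtain ⟨v, hv, hnbr⟩ := hfull
    exact Or.inl (add_le_crossWeight_of_full_of_forall_adj_lt hn ha hA hB hsplit hv hnbr)
  by_cases hempty : ∃ v, a v = 0 ∧ ∀ w, G.Adj v w → 0 < a w
  · obtain ⟨v, hv, hnbr⟩ := hempty
    left
    rw [← crossWeight_tsub ha]
    refine add_le_crossWeight_of_full_of_forall_adj_lt hn (fun _ => Nat.sub_le _ _) hB hA'
      (fun u w huw hu hun => ?_) (show n - a v = n by omega)
      fun w hvw => show n - a w < n by have := hnbr w hvw; omega
    have := hsplit u w huw (by omega) (by omega)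
    have := ha w
    omega
  push Not at hfull hempty
  refine Or.inr (exists_isRestrictedEdgeCut_sq_mul_card_le_crossWeight ha hA hB hsplit
    (fun v hv => ?_) (fun v hv => ?_) hpos hlt)
  · obtain ⟨w, hvw, hw⟩ := hfull v hv
    exact ⟨w, hvw, le_antisymm (ha w) hw⟩
  · obtain ⟨w, hvw, hw⟩ := hempty v hv
    exact ⟨w, hvw, Nat.le_zero.1 hw⟩

end SplitIndependent

section ComponentsOfTotalProd
variable {V : Type*} [DecidableEq V] {G : SimpleGraph V} {n : ℕ}
  {Γ : SimpleGraph (V × Fin n)}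

lemma isThickProfile_fiberCard (hΓ : ∀ ⦃p q⦄, Γ.Adj p q → G.Adj p.1 q.1)
    (hadj : ∀ p, ∃ q, Γ.Adj p q) (hpair : ∀ p q, ¬ (Γ.connectedComponentMk p).supp ⊆ {p, q})
    {K : Finset (V × Fin n)} (hK : ∀ ⦃p q⦄, Γ.Adj p q → p ∈ K → q ∈ K) :
    IsThickProfile G (fiberCard n K) where
  exists_adj_pos u hu := by
    obtain ⟨i, hi⟩ := fiberCard_pos_iff.1 hu
    obtain ⟨q, hq⟩ := hadj (u, i)
    exact ⟨q.1, hΓ hq, fiberCard_pos_iff.2 ⟨q.2, hK hq hi⟩⟩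
  exists_third u v huv hu hv := by
    by_contra hnone
    push Not at hnone
    obtain ⟨i, hi⟩ := fiberCard_pos_iff.1 (hu.symm ▸ Nat.one_pos)
    obtain ⟨j, hj⟩ := fiberCard_pos_iff.1 (hv.symm ▸ Nat.one_pos)
    have hclosed : ∀ ⦃p q⦄, Γ.Adj p q → p ∈ ({(u, i), (v, j)} : Set (V × Fin n)) →
        q ∈ ({(u, i), (v, j)} : Set (V × Fin n)) := by
      rintro p q hpq (rfl | rfl)
      all_goals
        have hqK := hK hpq ‹_›
        have hnbr : G.Adj u q.1 ∨ G.Adj v q.1 := by simp [hΓ hpq]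
        by_cases hqu : q.1 = u
        · exact Or.inl (Prod.ext hqu (eq_of_fiberCard_le_one hu.le (hqu ▸ hqK) hi))
        by_cases hqv : q.1 = v
        · exact Or.inr (Prod.ext hqv (eq_of_fiberCard_le_one hv.le (hqv ▸ hqK) hj))
        exact absurd (fiberCard_pos_iff.2 ⟨q.2, hqK⟩) (hnone q.1 hnbr hqu hqv).not_gt
    exact hpair (u, i) (v, j) (supp_connectedComponentMk_subset_of_adj_closed hclosed (by simp))

lemma exists_isThickProfile_fiberCard [Fintype V] [DecidableRel G.Adj] [Nonempty (V × Fin n)]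
    {F : Finset (Sym2 (V × Fin n))} (hF : IsRestrictedEdgeCut (totalProd G n) F)
    (hnot : ¬ ∃ p q, ((totalProd G n).deleteEdges F).Adj p q ∧
      (((totalProd G n).deleteEdges F).connectedComponentMk p).supp = {p, q}) :
    ∃ K : Finset (V × Fin n), IsThickProfile G (fiberCard n K) ∧
      IsThickProfile G (fun u => n - fiberCard n K u) ∧ (∃ u, 0 < fiberCard n K u) ∧
      (∃ u, fiberCard n K u < n) ∧ crossWeight G n (fiberCard n K) ≤ #F := by
  obtain ⟨-, hdisc, hnontriv⟩ := hF
  set Γ := (totalProd G n).deleteEdges F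
  have hΓ : ∀ ⦃p q⦄, Γ.Adj p q → G.Adj p.1 q.1 := fun _ _ h => (deleteEdges_adj.1 h).1
  have hadj : ∀ p, ∃ q, Γ.Adj p q := fun p => exists_adj_of_supp_nontrivial (hnontriv _)
  have hpair : ∀ p q, ¬ (Γ.connectedComponentMk p).supp ⊆ {p, q} := by
    intro p q hsub
    have hpq := adj_of_supp_connectedComponentMk_subset_pair (hnontriv _) hsub
    refine hnot ⟨p, q, hpq, hsub.antisymm ?_⟩
    rintro r (rfl | rfl)
    exacts [rfl, ConnectedComponent.connectedComponentMk_eq_of_adj hpq.symm]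
  obtain ⟨x, y, hxy⟩ : ∃ x y, ¬ Γ.Reachable x y := by
    by_contra h
    push Not at h
    exact hdisc ⟨h⟩
  set K : Finset (V × Fin n) := {p | Γ.Reachable x p}
  have hK : ∀ ⦃p q⦄, Γ.Adj p q → p ∈ K → q ∈ K := fun p q hpq hp => by
    simp only [K, mem_filter, mem_univ, true_and] at hp ⊢
    exact hp.trans hpq.reachable
  have hKc : ∀ ⦃p q⦄, Γ.Adj p q → p ∈ Kᶜ → q ∈ Kᶜ := fun p q hpq hp => by
    simp only [mem_compl] at hp ⊢
    exact fun hq => hp (hK hpq.symm hq)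
  refine ⟨K, isThickProfile_fiberCard hΓ hadj hpair hK, ?_,
    ⟨x.1, fiberCard_pos_iff.2 ⟨x.2, by simp [K]⟩⟩, ⟨y.1, ?_⟩, ?_⟩
  · rw [← funext (fiberCard_compl K)]
    exact isThickProfile_fiberCard hΓ hadj hpair hKc
  · have := fiberCard_pos_iff.2 (⟨y.2, by simpa [K] using hxy⟩ : ∃ i, (y.1, i) ∈ Kᶜ)
    rw [fiberCard_compl] at this
    omega
  · rw [← card_cutEdgeFinset_totalProd]
    refine card_le_card (coe_subset.1 ?_)
    rw [coe_cutEdgeFinset]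
    exact cutEdges_subset_of_adj_closed fun p q hpq hp => hK hpq hp

end ComponentsOfTotalProd

theorem stmt10 {V : Type*} [Fintype V] (G : SimpleGraph V) (hG : G.Connected)
    (hV : 2 ≤ Fintype.card V) (n : ℕ) (hn : 3 ≤ n)
    (h : ((n * minEdgeDegree G + 2 * (n - 1) : ℕ) : ℕ∞) <
      ((n ^ 2 : ℕ) : ℕ∞) * restrictedEdgeConn G) :
    SuperRestrictedEdgeConnected (totalProd G n) := by
  classical
  have : Nontrivial V := Fintype.one_lt_card_iff_nontrivial.1 hV
  have : Nonempty (V × Fin n) := ⟨(Classical.arbitrary V, ⟨0, by omega⟩)⟩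
  intro F hF hFmin
  by_contra hnot
  obtain ⟨K, hA, hB, hpos, hlt, hWF⟩ := exists_isThickProfile_fiberCard hF hnot
  have hFle : #F ≤ n * minEdgeDegree G + 2 * (n - 1) := by
    have := restrictedEdgeConn_totalProd_le hG.preconnected.exists_adj_of_nontrivial
      (by omega : 2 ≤ n)
    rw [← hFmin] at this
    exact_mod_cast this
  rcases add_le_crossWeight_or_exists_isRestrictedEdgeCut hn (fiberCard_le K) hA hB hpos hlt
    with hξ | ⟨C, hC, hCW⟩
  · omega
  · refine h.not_ge ?_
    calc ((n ^ 2 : ℕ) : ℕ∞) * restrictedEdgeConn G ≤ ((n ^ 2 : ℕ) : ℕ∞) * #C := by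
          gcongr
          exact restrictedEdgeConn_le hC
      _ ≤ _ := by exact_mod_cast hCW.trans (hWF.trans hFle)
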